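/- arXiv:2509.02777 — 2 statements merged into one kernel-verified Lean document; each statement's English description precedes it below -/
import Mathlib

section
/- Vanishing of the f-Kloosterman sum for odd modulus: for every positive integer n and every odd positive integer c, A_c(n|f) = 0, where A_c(n|f) = sqrt(2c/6) · Σ_b (−3|b) · sin(−πb/(6c)) and the sum is over integers b with 0 ≤ b < 6c and b² ≡ 1−24n (mod 24c). -/
/-!
The reflection `b ↦ 6c - b` is a fixed-point-free involution of the index set: every index `b`
satisfies `b² ≡ 1 (mod 24)`, so `b` is odd and prime to `3`, and for odd `c` the identity
`(6c - b)² - b² = 24c · (3c - b)/2` keeps the congruence. The reflection leaves the sine factor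
unchanged and flips the sign of `(-3|b) = (b|3)`, so the terms cancel in pairs.
-/

open Filter Finset Real

/-- The Kronecker symbol `(a|n)` for a nonnegative lower entry `n`:
completely multiplicative extension of the Legendre symbol, with
`(a|2) = 0, 1, -1` according to `a` even, `a ≡ ±1 (mod 8)`, `a ≡ ±3 (mod 8)`,
and `(a|0) = 1` iff `a = ±1`. -/
def kron (a : ℤ) (n : ℕ) : ℤ :=
  if n = 0 then (if a = 1 ∨ a = -1 then 1 else 0)
  else (if a % 2 = 0 then 0 else if a % 8 = 1 ∨ a % 8 = 7 then 1 else -1) ^ n.factorization 2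
    * jacobiSym a (n / 2 ^ n.factorization 2)

/-- The Kloosterman-type sum `A_c(n|f)` attached to Ramanujan's third order mock
theta function `f`: here `b` runs over `0 ≤ b < 6c` with `b² ≡ 1 - 24n (mod 24c)`. -/
noncomputable def Af (n c : ℕ) : ℝ :=
  Real.sqrt (2 * c / 6) *
    ∑ b ∈ (Finset.range (6 * c)).filter
        (fun b : ℕ => ((b : ℤ) ^ 2 - (1 - 24 * (n : ℤ))) % (24 * (c : ℤ)) = 0),
      (kron (-3) b : ℝ) * Real.sin (-(π * b) / (6 * c))

theorem kron_eq_jacobiSym_of_odd (a : ℤ) {b : ℕ} (hb : Odd b) : kron a b = jacobiSym a b := by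
  simp [kron, hb.pos.ne', Nat.factorization_eq_zero_of_not_dvd hb.not_two_dvd_nat]

theorem jacobiSym_neg_three (b : ℕ) (hb : Odd b) : jacobiSym (-3) b = jacobiSym b 3 := by
  -- `J(-1|b) = χ₄ b` cancels the reciprocity sign `qrSign b 3 = J(χ₄ b|3)`.
  have hχ : ZMod.χ₄ b * jacobiSym (ZMod.χ₄ b) 3 = 1 := by
    rcases Nat.odd_mod_four_iff.mp (Nat.odd_iff.mp hb) with h | h
    · rw [ZMod.χ₄_nat_one_mod_four h, jacobiSym.one_left, one_mul]
    · rw [ZMod.χ₄_nat_three_mod_four h]; norm_num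
  rw [show (-3 : ℤ) = -((3 : ℕ) : ℤ) from rfl, jacobiSym.neg _ hb,
    jacobiSym.quadratic_reciprocity' (by decide) hb, qrSign, ← mul_assoc, hχ, one_mul]

theorem jacobiSym_neg_three_eq_neg {b b' : ℕ} (hb : Odd b) (hb' : Odd b') (h : 3 ∣ b + b') :
    jacobiSym (-3) b' = -jacobiSym (-3) b := by
  have hmod : (b' : ℤ) % (3 : ℕ) = (-1 * b : ℤ) % (3 : ℕ) := by push_cast; omega
  rw [jacobiSym_neg_three b hb, jacobiSym_neg_three b' hb', jacobiSym.mod_left' hmod,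
    jacobiSym.mul_left]
  norm_num

theorem sin_neg_pi_mul_sub_div (x N : ℝ) (hN : N ≠ 0) :
    sin (-(π * (N - x)) / N) = sin (-(π * x) / N) := by
  have harg : -(π * (N - x)) / N = π * x / N - π := by field_simp; ring
  rw [harg, sin_sub_pi, neg_div, sin_neg]

theorem Int.sq_six_mul_sub_modEq {b c : ℤ} (hb : Odd b) (hc : Odd c) :
    (6 * c - b) ^ 2 ≡ b ^ 2 [ZMOD 24 * c] := by
  obtain ⟨t, ht⟩ : Even (3 * c - b) := ((by decide : Odd (3 : ℤ)).mul hc).sub_odd hb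
  exact Int.modEq_iff_dvd.mpr ⟨-t, by linear_combination (-12 * c) * ht⟩

theorem Int.odd_and_not_three_dvd_of_sq_modEq_one {b : ℤ} (h : b ^ 2 ≡ 1 [ZMOD 24]) :
    Odd b ∧ ¬ 3 ∣ b := by
  obtain ⟨m, hm⟩ := Int.modEq_iff_dvd.mp h.symm
  constructor
  · rw [← Int.not_even_iff_odd]
    rintro ⟨k, rfl⟩
    have : 1 = 2 * (2 * k ^ 2 - 12 * m) := by linear_combination -hm
    omega
  · rintro ⟨k, rfl⟩
    have : 1 = 3 * (3 * k ^ 2 - 8 * m) := by linear_combination -hm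
    omega

def afIndex (n c : ℕ) : Finset ℕ :=
  (range (6 * c)).filter (fun b : ℕ => ((b : ℤ) ^ 2 - (1 - 24 * (n : ℤ))) % (24 * (c : ℤ)) = 0)

noncomputable def afTerm (c b : ℕ) : ℝ :=
  (kron (-3) b : ℝ) * sin (-(π * b) / (6 * c))

theorem Af_eq (n c : ℕ) : Af n c = √(2 * c / 6) * ∑ b ∈ afIndex n c, afTerm c b := rfl

theorem mem_afIndex {n c b : ℕ} :
    b ∈ afIndex n c ↔ b < 6 * c ∧ (b : ℤ) ^ 2 ≡ 1 - 24 * n [ZMOD 24 * c] := by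
  rw [afIndex, mem_filter, mem_range, Int.modEq_comm, Int.modEq_iff_dvd,
    Int.dvd_iff_emod_eq_zero]

theorem odd_and_not_three_dvd_of_mem_afIndex {n c b : ℕ} (hb : b ∈ afIndex n c) :
    Odd b ∧ ¬ 3 ∣ b := by
  have hsq : (b : ℤ) ^ 2 ≡ 1 [ZMOD 24] :=
    (mem_afIndex.mp hb).2.of_mul_right c |>.trans (Int.modEq_iff_dvd.mpr ⟨n, by ring⟩)
  obtain ⟨hodd, h3⟩ := Int.odd_and_not_three_dvd_of_sq_modEq_one hsq
  exact ⟨Int.odd_coe_nat b |>.mp hodd, fun h => h3 (by exact_mod_cast h)⟩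

theorem six_mul_sub_mem_afIndex {n c b : ℕ} (hc : Odd c) (hb : b ∈ afIndex n c) :
    6 * c - b ∈ afIndex n c := by
  obtain ⟨hlt, hsq⟩ := mem_afIndex.mp hb
  have hbo := (odd_and_not_three_dvd_of_mem_afIndex hb).1
  refine mem_afIndex.mpr ⟨by have := hbo.pos; omega, ?_⟩
  rw [Nat.cast_sub hlt.le]
  push_cast
  exact (Int.sq_six_mul_sub_modEq (Int.odd_coe_nat b |>.mpr hbo)
    (Int.odd_coe_nat c |>.mpr hc)).trans hsq

theorem afTerm_six_mul_sub {c b : ℕ} (hb : Odd b) (hlt : b < 6 * c) :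
    afTerm c (6 * c - b) = -afTerm c b := by
  have hb' : Odd (6 * c - b) := Nat.Even.sub_odd hlt.le ⟨3 * c, by ring⟩ hb
  have hc : (6 * c : ℝ) ≠ 0 := by
    have : 0 < c := by omega
    positivity
  have hsin := sin_neg_pi_mul_sub_div b (6 * c) hc
  rw [afTerm, afTerm, kron_eq_jacobiSym_of_odd _ hb, kron_eq_jacobiSym_of_odd _ hb',
    jacobiSym_neg_three_eq_neg hb hb' ⟨2 * c, by omega⟩, Nat.cast_sub hlt.le]
  push_cast
  rw [hsin]
  ring

theorem Af_eq_zero_of_odd_general (n c : ℕ) (hodd : Odd c) :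
    Af n c = 0 := by
  rw [Af_eq]
  refine mul_eq_zero_of_right _ (sum_involution (fun b _ => 6 * c - b) ?_ ?_
    (fun _ hb => six_mul_sub_mem_afIndex hodd hb) ?_)
  · intro b hb
    rw [afTerm_six_mul_sub (odd_and_not_three_dvd_of_mem_afIndex hb).1 (mem_afIndex.mp hb).1,
      add_neg_cancel]
  · intro b hb _ hfix
    exact (odd_and_not_three_dvd_of_mem_afIndex hb).2 ⟨c, by omega⟩
  · intro b hb
    have := (mem_afIndex.mp hb).1
    omega

/-- `A_c(n|f)` vanishes when `c` is odd. -/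
theorem Af_eq_zero_of_odd (n c : ℕ) (hn : 0 < n) (hc : 0 < c) (hodd : Odd c) :
    Af n c = 0 :=
  Af_eq_zero_of_odd_general n c hodd
end

section
/- Realness of the unitary-divisor Kloosterman sums: let N, c, m be positive integers and let d, r be integers. Let ε : U_N → {±1} be a homomorphism for the operation u∗v (i.e. ε(u∗v) = ε(u)ε(v) for all u, v ∈ U_N) with ε(N) = −1. Then the complex number i · sqrt(c/(2N)) · Σ_{u ∈ U_N} ε(u) · Σ_b e(mb/(2Nc)) is real, where for each u the inner sum is over integers b with 0 ≤ b < 2Nc, b ≡ r·ψ_N(u) (mod 2N), and b² ≡ −d (mod 4Nc). -/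
open Filter Finset Real

/-- The set of unitary divisors of `N`: divisors `u` of `N` with `gcd(u, N/u) = 1`. -/
def UN (N : ℕ) : Finset ℕ := N.divisors.filter fun u => Nat.Coprime u (N / u)

/-!
Negation `b ↦ -b` modulo `2Nc` maps the index set of the inner sum for `u` onto that for `N / u`
(as `-ψ_N(u)` satisfies the congruences defining `ψ_N(N / u)`) and conjugates each exponential,
so the inner sum for `N / u` is the conjugate of the one for `u`. Since `N / u = u ∗ N`, also
`ε(N / u) = -ε(u)`; hence the outer sum is purely imaginary and `i` times it is real.
-/

open scoped ComplexConjugate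

namespace UN

variable {N u : ℕ}

lemma ne_zero_of_mem (hu : u ∈ UN N) : N ≠ 0 :=
  (Nat.mem_divisors.mp (Finset.mem_filter.mp hu).1).2

lemma dvd_of_mem (hu : u ∈ UN N) : u ∣ N :=
  (Nat.mem_divisors.mp (Finset.mem_filter.mp hu).1).1

lemma div_div_of_mem (hu : u ∈ UN N) : N / (N / u) = u :=
  Nat.div_div_self (dvd_of_mem hu) (ne_zero_of_mem hu)

lemma self_mem (hN : N ≠ 0) : N ∈ UN N := by
  simp [UN, hN, Nat.div_self (Nat.pos_of_ne_zero hN)]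

lemma div_mem (hu : u ∈ UN N) : N / u ∈ UN N := by
  have hN := ne_zero_of_mem hu
  simp only [UN, Finset.mem_filter, Nat.mem_divisors] at hu ⊢
  refine ⟨⟨Nat.div_dvd_of_dvd hu.1.1, hN⟩, ?_⟩
  rw [Nat.div_div_self hu.1.1 hN]
  exact hu.2.symm

/-- `N / u = u ∗ N`. -/
lemma apply_div_eq_neg {ε : ℕ → ℤ}
    (hmul : ∀ u ∈ UN N, ∀ v ∈ UN N, ε (u * v / Nat.gcd u v ^ 2) = ε u * ε v)
    (hεN : ε N = -1) (hu : u ∈ UN N) : ε (N / u) = -ε u := by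
  have hu0 : 0 < u :=
    Nat.pos_of_dvd_of_pos (dvd_of_mem hu) (Nat.pos_of_ne_zero (ne_zero_of_mem hu))
  have h := hmul u hu N (self_mem (ne_zero_of_mem hu))
  rwa [Nat.gcd_eq_left (dvd_of_mem hu), pow_two, Nat.mul_div_mul_left _ _ hu0, hεN,
    mul_neg_one] at h

end UN

lemma Int.ModEq.sq_of_two_mul {n a b : ℤ} (h : a ≡ b [ZMOD 2 * n]) :
    a ^ 2 ≡ b ^ 2 [ZMOD 4 * n] := by
  obtain ⟨k, hk⟩ := (Int.modEq_iff_dvd.mp h)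
  exact Int.modEq_iff_dvd.mpr ⟨k * (a + n * k), by
    rw [show b ^ 2 - a ^ 2 = (b - a) * (b + a) by ring, hk, show b = a + 2 * n * k by linarith]
    ring⟩

lemma conj_sum_eq_neg_of_involution {ι : Type*} {s : Finset ι} (σ : ι → ι)
    (hσ : ∀ u ∈ s, σ u ∈ s) (hσσ : ∀ u ∈ s, σ (σ u) = u) {ε : ι → ℤ} {A : ι → ℂ}
    (hε : ∀ u ∈ s, ε (σ u) = -ε u) (hA : ∀ u ∈ s, conj (A u) = A (σ u)) :
    conj (∑ u ∈ s, (ε u : ℂ) * A u) = -∑ u ∈ s, (ε u : ℂ) * A u := by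
  calc conj (∑ u ∈ s, (ε u : ℂ) * A u)
      = ∑ u ∈ s, (ε u : ℂ) * A (σ u) := by
        simp only [map_sum, map_mul, map_intCast]
        exact Finset.sum_congr rfl fun u hu => by rw [hA u hu]
    _ = ∑ u ∈ s, (ε (σ u) : ℂ) * A u :=
        Finset.sum_nbij' σ σ hσ hσ hσσ hσσ fun u hu => by rw [hσσ u hu]
    _ = -∑ u ∈ s, (ε u : ℂ) * A u := by
        rw [← Finset.sum_neg_distrib]
        exact Finset.sum_congr rfl fun u hu => by rw [hε u hu]; push_cast; ring

lemma sub_mod_sub_mod_self {K b : ℕ} (hb : b < K) : (K - (K - b) % K) % K = b := by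
  rcases Nat.eq_zero_or_pos b with rfl | hb0
  · simp
  · rw [Nat.mod_eq_of_lt (by omega : K - b < K), Nat.mod_eq_of_lt (by omega)]
    omega

lemma intCast_sub_mod_modEq_neg {K b : ℕ} (hb : b ≤ K) :
    (((K - b) % K : ℕ) : ℤ) ≡ -b [ZMOD K] := by
  rw [Int.natCast_mod, Nat.cast_sub hb]
  exact (Int.mod_modEq _ _).trans (Int.modEq_iff_dvd.mpr ⟨-1, by ring⟩)

lemma conj_sum_filter_range_eq {K : ℕ} {f : ℕ → ℂ} {P Q : ℕ → Prop} [DecidablePred P]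
    [DecidablePred Q] (hf : ∀ b < K, f ((K - b) % K) = conj (f b))
    (hPQ : ∀ b < K, P b → Q ((K - b) % K)) (hQP : ∀ b < K, Q b → P ((K - b) % K)) :
    conj (∑ b ∈ (range K).filter P, f b) = ∑ b ∈ (range K).filter Q, f b := by
  rw [map_sum]
  refine Finset.sum_nbij' (fun b => (K - b) % K) (fun b => (K - b) % K) ?_ ?_ ?_ ?_ ?_ <;>
    simp only [Finset.mem_filter, Finset.mem_range]
  · rintro b ⟨hb, hP⟩
    exact ⟨Nat.mod_lt _ (by omega), hPQ b hb hP⟩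
  · rintro b ⟨hb, hQ⟩
    exact ⟨Nat.mod_lt _ (by omega), hQP b hb hQ⟩
  · rintro b ⟨hb, -⟩
    exact sub_mod_sub_mod_self hb
  · rintro b ⟨hb, -⟩
    exact sub_mod_sub_mod_self hb
  · rintro b ⟨hb, -⟩
    exact (hf b hb).symm

lemma exp_mul_sub_mod_eq_conj (m : ℕ) {K b : ℕ} (hb : b < K) :
    Complex.exp (2 * π * Complex.I * (m * ((K - b) % K : ℕ) / K)) =
      conj (Complex.exp (2 * π * Complex.I * (m * b / K))) := by
  have : NeZero K := ⟨by omega⟩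
  have h : ∀ j : ℕ, Complex.exp (2 * π * Complex.I * (m * j / K)) =
      ZMod.stdAddChar ((m * j : ℕ) : ZMod K) := fun j => by
    rw [← Int.cast_natCast (R := ZMod K), ZMod.stdAddChar_coe]
    push_cast
    ring_nf
  rw [h, h, ← AddChar.map_neg_eq_conj]
  congr 1
  push_cast [ZMod.natCast_mod, Nat.cast_sub hb.le, ZMod.natCast_self]
  ring

/-- `b` indexes the inner sum attached to `u`; the `ψ` here is `ψ_N(u)`, given by its defining
congruences. -/
def IsKloostermanIndex (N c u : ℕ) (d r b : ℤ) : Prop :=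
  (∃ ψ : ℤ, ψ ≡ 1 [ZMOD 2 * ((N : ℤ) / u)] ∧ ψ ≡ -1 [ZMOD 2 * u] ∧ b ≡ r * ψ [ZMOD 2 * N]) ∧
    b ^ 2 + d ≡ 0 [ZMOD 4 * N * c]

namespace IsKloostermanIndex

variable {N c u : ℕ} {d r b b' : ℤ}

lemma of_modEq (h : IsKloostermanIndex N c u d r b) (hb : b ≡ b' [ZMOD 2 * N * c]) :
    IsKloostermanIndex N c u d r b' := by
  obtain ⟨⟨ψ, h1, h2, h3⟩, h4⟩ := h
  refine ⟨⟨ψ, h1, h2, (hb.symm.of_mul_right c).trans h3⟩, ?_⟩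
  rw [mul_assoc] at hb
  have hsq := hb.symm.sq_of_two_mul
  rw [← mul_assoc] at hsq
  exact (hsq.add_right d).trans h4

lemma neg_div (hu : u ∈ UN N) (h : IsKloostermanIndex N c u d r b) :
    IsKloostermanIndex N c (N / u) d r (-b) := by
  obtain ⟨⟨ψ, h1, h2, h3⟩, h4⟩ := h
  refine ⟨⟨-ψ, ?_, ?_, ?_⟩, ?_⟩
  · rw [← Int.natCast_div, UN.div_div_of_mem hu]
    simpa using h2.neg
  · rw [Int.natCast_div]
    exact h1.neg
  · rw [mul_neg]
    exact h3.neg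
  · rwa [neg_sq]

end IsKloostermanIndex

open scoped Classical in
noncomputable def unitaryKloostermanInnerSum (N c m u : ℕ) (d r : ℤ) : ℂ :=
  ∑ b ∈ (range (2 * N * c)).filter (fun b : ℕ => IsKloostermanIndex N c u d r b),
    Complex.exp (2 * (π : ℂ) * Complex.I * ((m : ℂ) * (b : ℂ) / (2 * N * c)))

lemma conj_unitaryKloostermanInnerSum {N c m u : ℕ} {d r : ℤ} (hu : u ∈ UN N) :
    conj (unitaryKloostermanInnerSum N c m u d r) =
      unitaryKloostermanInnerSum N c m (N / u) d r := by
  classical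
  have hK : ((2 * N * c : ℕ) : ℂ) = 2 * N * c := by push_cast; ring
  have hneg : ∀ b < 2 * N * c,
      -(b : ℤ) ≡ ((2 * N * c - b) % (2 * N * c) : ℕ) [ZMOD 2 * N * c] := by
    intro b hb
    have := (intCast_sub_mod_modEq_neg hb.le).symm
    rwa [Nat.cast_mul, Nat.cast_mul, Nat.cast_ofNat] at this
  unfold unitaryKloostermanInnerSum
  rw [← hK]
  refine conj_sum_filter_range_eq (fun b hb => exp_mul_sub_mod_eq_conj m hb)
    (fun b hb h => (h.neg_div hu).of_modEq (hneg b hb)) (fun b hb h => ?_)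
  have := (h.neg_div (UN.div_mem hu)).of_modEq (hneg b hb)
  rwa [UN.div_div_of_mem hu] at this

open scoped Classical in
theorem kloosterman_sum_real_general (N c m : ℕ)
    (d r : ℤ) (ε : ℕ → ℤ)
    (hmul : ∀ u ∈ UN N, ∀ v ∈ UN N, ε (u * v / Nat.gcd u v ^ 2) = ε u * ε v)
    (hεN : ε N = -1) :
    (Complex.I * (Real.sqrt (c / (2 * N)) : ℂ) *
      ∑ u ∈ UN N, (ε u : ℂ) *
        ∑ b ∈ (Finset.range (2 * N * c)).filter (fun b : ℕ =>
            (∃ ψ : ℤ, ψ % (2 * ((N : ℤ) / (u : ℤ))) = 1 % (2 * ((N : ℤ) / (u : ℤ))) ∧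
              ψ % (2 * (u : ℤ)) = (-1) % (2 * (u : ℤ)) ∧
              (b : ℤ) % (2 * (N : ℤ)) = (r * ψ) % (2 * (N : ℤ))) ∧
            ((b : ℤ) ^ 2 + d) % (4 * (N : ℤ) * (c : ℤ)) = 0),
          Complex.exp (2 * (π : ℂ) * Complex.I * ((m : ℂ) * (b : ℂ) / (2 * N * c)))).im
      = 0 := by
  have hS := conj_sum_eq_neg_of_involution (s := UN N) (fun u => N / u)
    (fun _ => UN.div_mem) (fun _ => UN.div_div_of_mem) (fun _ => UN.apply_div_eq_neg hmul hεN)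
    (A := fun u => unitaryKloostermanInnerSum N c m u d r)
    (fun _ => conj_unitaryKloostermanInnerSum)
  have hreal : conj (Complex.I * (Real.sqrt (c / (2 * N)) : ℂ) *
      ∑ u ∈ UN N, (ε u : ℂ) * unitaryKloostermanInnerSum N c m u d r) =
      Complex.I * (Real.sqrt (c / (2 * N)) : ℂ) *
        ∑ u ∈ UN N, (ε u : ℂ) * unitaryKloostermanInnerSum N c m u d r := by
    rw [map_mul, map_mul, hS, Complex.conj_I, Complex.conj_ofReal]
    ring
  rw [← Complex.conj_eq_iff_im]
  -- the two sides differ only in the `Decidable` instances of the filters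
  convert hreal using 5 <;> unfold unitaryKloostermanInnerSum <;> congr!

open scoped Classical in
/-- Realness of the unitary-divisor Kloosterman sums: if `ε : U_N → {±1}` is a
homomorphism for `u ∗ v = uv / gcd(u,v)²` with `ε(N) = -1`, then
`i √(c/2N) ∑_{u ∥ N} ε(u) ∑_{b (2Nc), b ≡ rψ_N(u) (2N), b² ≡ -d (4Nc)} e(mb/2Nc)`
is real.  Here `ψ_N(u)` is characterized by `ψ_N(u) ≡ 1 (mod 2N/u)` and
`ψ_N(u) ≡ -1 (mod 2u)`, which we encode by an existential over `ψ`. -/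
theorem kloosterman_sum_real (N c m : ℕ) (hN : 0 < N) (hc : 0 < c) (hm : 0 < m)
    (d r : ℤ) (ε : ℕ → ℤ)
    (hsign : ∀ u ∈ UN N, ε u = 1 ∨ ε u = -1)
    (hmul : ∀ u ∈ UN N, ∀ v ∈ UN N, ε (u * v / Nat.gcd u v ^ 2) = ε u * ε v)
    (hεN : ε N = -1) :
    (Complex.I * (Real.sqrt (c / (2 * N)) : ℂ) *
      ∑ u ∈ UN N, (ε u : ℂ) *
        ∑ b ∈ (Finset.range (2 * N * c)).filter (fun b : ℕ =>
            (∃ ψ : ℤ, ψ % (2 * ((N : ℤ) / (u : ℤ))) = 1 % (2 * ((N : ℤ) / (u : ℤ))) ∧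
              ψ % (2 * (u : ℤ)) = (-1) % (2 * (u : ℤ)) ∧
              (b : ℤ) % (2 * (N : ℤ)) = (r * ψ) % (2 * (N : ℤ))) ∧
            ((b : ℤ) ^ 2 + d) % (4 * (N : ℤ) * (c : ℤ)) = 0),
          Complex.exp (2 * (π : ℂ) * Complex.I * ((m : ℂ) * (b : ℂ) / (2 * N * c)))).im
      = 0 :=
  kloosterman_sum_real_general N c m d r ε hmul hεN
end
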